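/- arXiv:2304.14262 — 2 statements merged into one kernel-verified Lean document; each statement's English description precedes it below -/
import Mathlib

section
/- Lyapunov difference formula: for every integer price vector p : Ω → ℕ and every subset X ⊆ Ω, one has L(p) − L(p + χ_X) = d_p(X) − ∑_{i∈X} b i. -/
open Finset

section MarketDefs

variable {Ω N : Type*}

/-- A bundle for a buyer with demand `dj`: at most `b i` copies of each object,
at most `dj` items in total. -/
def IsBundle [Fintype Ω] (b : Ω → ℕ) (dj : ℕ) (y : Ω → ℕ) : Prop :=
  (∀ i, y i ≤ b i) ∧ ∑ i, y i ≤ dj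

/-- Utility of bundle `y` at prices `p` for a buyer with per-unit valuations `v`. -/
noncomputable def utility [Fintype Ω] (v : Ω → ℕ) (p : Ω → ℝ) (y : Ω → ℕ) : ℝ :=
  ∑ i, ((v i : ℝ) - p i) * (y i : ℝ)

/-- `y` is a preferred bundle (member of the demand set `D_j(p)`). -/
def InDemand [Fintype Ω] (b : Ω → ℕ) (dj : ℕ) (v : Ω → ℕ) (p : Ω → ℝ) (y : Ω → ℕ) : Prop :=
  IsBundle b dj y ∧ ∀ z, IsBundle b dj z → utility v p z ≤ utility v p y

/-- Feasible allocation. -/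
def Feasible [Fintype Ω] [Fintype N] (b : Ω → ℕ) (d : N → ℕ) (x : Ω → N → ℕ) : Prop :=
  (∀ i, ∑ j, x i j ≤ b i) ∧ ∀ j, ∑ i, x i j ≤ d j

/-- Stable allocation at prices `p`: feasible, and every buyer gets a preferred bundle. -/
def Stable [Fintype Ω] [Fintype N] (b : Ω → ℕ) (d : N → ℕ) (v : Ω → N → ℕ)
    (p : Ω → ℝ) (x : Ω → N → ℕ) : Prop :=
  Feasible b d x ∧ ∀ j, InDemand b (d j) (fun i => v i j) p (fun i => x i j)

/-- Competitive price vector: nonnegative, and some allocation is stable for it. -/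
def Competitive [Fintype Ω] [Fintype N] (b : Ω → ℕ) (d : N → ℕ) (v : Ω → N → ℕ)
    (p : Ω → ℝ) : Prop :=
  (∀ i, 0 ≤ p i) ∧ ∃ x, Stable b d v p x

/-- Walrasian price vector: some stable allocation sells as much as possible. -/
def Walrasian [Fintype Ω] [Fintype N] (b : Ω → ℕ) (d : N → ℕ) (v : Ω → N → ℕ)
    (p : Ω → ℝ) : Prop :=
  (∀ i, 0 ≤ p i) ∧ ∃ x, Stable b d v p x ∧
    ∑ i, ∑ j, x i j = min (∑ i, b i) (∑ j, d j)

/-- Componentwise minimum Walrasian price vector. -/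
def MinWalrasian [Fintype Ω] [Fintype N] (b : Ω → ℕ) (d : N → ℕ) (v : Ω → N → ℕ)
    (p : Ω → ℝ) : Prop :=
  Walrasian b d v p ∧ ∀ q, Walrasian b d v q → ∀ i, p i ≤ q i

end MarketDefs

section TierDefs

variable {Ω N : Type*}

/-- The set `P` of positive payoffs `u i`. -/
noncomputable def posPayoffs [Fintype Ω] (u : Ω → ℝ) : Finset ℝ :=
  (Finset.univ.image u).filter (fun t => 0 < t)

/-- The threshold payoff `θ_j(p)`: the largest positive payoff value `t` such that the
supply of items with payoff at least `t` covers the demand, if it exists; otherwise the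
minimum positive payoff value (and junk value `0` if there is no positive payoff). -/
noncomputable def theta [Fintype Ω] (b : Ω → ℕ) (dj : ℕ) (u : Ω → ℝ) : ℝ :=
  if hQ : ((posPayoffs u).filter
      (fun t => dj ≤ ∑ i ∈ Finset.univ.filter (fun i => t ≤ u i), b i)).Nonempty then
    ((posPayoffs u).filter
      (fun t => dj ≤ ∑ i ∈ Finset.univ.filter (fun i => t ≤ u i), b i)).max' hQ
  else if hP : (posPayoffs u).Nonempty then (posPayoffs u).min' hP
  else 0

/-- `Ω'_j(p)`: objects with payoff strictly above the threshold. -/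
noncomputable def OmegaP [Fintype Ω] (b : Ω → ℕ) (dj : ℕ) (u : Ω → ℝ) : Finset Ω :=
  if dj = 0 ∨ posPayoffs u = ∅ then ∅
  else Finset.univ.filter (fun i => theta b dj u < u i)

/-- `Ω''_j(p)`: objects with payoff equal to the threshold. -/
noncomputable def OmegaPP [Fintype Ω] (b : Ω → ℕ) (dj : ℕ) (u : Ω → ℝ) : Finset Ω :=
  if dj = 0 ∨ posPayoffs u = ∅ then ∅
  else Finset.univ.filter (fun i => u i = theta b dj u)

/-- `Ω'''_j(p)`: objects with payoff zero. -/
noncomputable def OmegaPPP [Fintype Ω] (u : Ω → ℝ) : Finset Ω :=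
  Finset.univ.filter (fun i => u i = 0)

/-- `d'_j(p)`. -/
noncomputable def dPr [Fintype Ω] (b : Ω → ℕ) (dj : ℕ) (u : Ω → ℝ) : ℕ :=
  ∑ i ∈ OmegaP b dj u, b i

/-- `d''_j(p)`. -/
noncomputable def dPPr [Fintype Ω] (b : Ω → ℕ) (dj : ℕ) (u : Ω → ℝ) : ℕ :=
  min (∑ i ∈ OmegaPP b dj u, b i) (dj - dPr b dj u)

/-- Payoff function of buyer `j` at prices `p`. -/
noncomputable def payoff (v : Ω → N → ℕ) (p : Ω → ℝ) (j : N) (i : Ω) : ℝ :=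
  (v i j : ℝ) - p i

/-- `d_p(I)`: total demand that must be served from the item set `I`
(here `a - b` is truncated subtraction on `ℕ`, i.e. `max (0, a - b)`). -/
noncomputable def overDemand [Fintype Ω] [Fintype N] [DecidableEq Ω] (b : Ω → ℕ)
    (d : N → ℕ) (v : Ω → N → ℕ) (p : Ω → ℝ) (I : Finset Ω) : ℕ :=
  ∑ j : N,
    ((∑ i ∈ OmegaP b (d j) (payoff v p j) ∩ I, b i) +
      (dPPr b (d j) (payoff v p j) -
        ∑ i ∈ OmegaPP b (d j) (payoff v p j) \ I, min (b i) (dPPr b (d j) (payoff v p j))))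

end TierDefs

section Lyapunov

variable {Ω N : Type*}

/-- Indirect utility `V_j(p)`: the maximum utility of a bundle for the buyer. -/
noncomputable def indirectUtility [Fintype Ω] (b : Ω → ℕ) (dj : ℕ) (v : Ω → ℕ)
    (p : Ω → ℝ) : ℝ :=
  sSup {r : ℝ | ∃ y, IsBundle b dj y ∧ utility v p y = r}

/-- The Lyapunov function `L(p) = ∑_j V_j(p) + ∑_i b i * p i`. -/
noncomputable def Lyapunov [Fintype Ω] [Fintype N] (b : Ω → ℕ) (d : N → ℕ)
    (v : Ω → N → ℕ) (p : Ω → ℝ) : ℝ :=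
  (∑ j, indirectUtility b (d j) (fun i => v i j) p) + ∑ i, (b i : ℝ) * p i

end Lyapunov

set_option linter.unusedSectionVars false

section Helpers


variable {Ω : Type*} [Fintype Ω] [DecidableEq Ω]

/-- Supply of items with payoff ≥ t. -/
def SS (b : Ω → ℕ) (u : Ω → ℤ) (t : ℤ) : ℕ :=
  ∑ i ∈ univ.filter (fun i => t ≤ u i), b i

lemma SS_antitone (b : Ω → ℕ) (u : Ω → ℤ) {s t : ℤ} (h : s ≤ t) :
    SS b u t ≤ SS b u s := by
  apply Finset.sum_le_sum_of_subset
  intro i hi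
  simp only [mem_filter, mem_univ, true_and] at *
  omega

noncomputable def pkey (u : Ω → ℤ) (i : Ω) : ℤ ×ₗ ℕ :=
  toLex (-(u i), ((Fintype.equivFin Ω) i : ℕ))

lemma pkey_inj (u : Ω → ℤ) {i i' : Ω} (h : pkey u i = pkey u i') : i = i' := by
  have := congrArg (fun x => (ofLex x).2) h
  simpa using (Fintype.equivFin Ω).injective (Fin.val_injective this)

lemma pkey_lt_imp (u : Ω → ℤ) {i i' : Ω} (h : pkey u i' < pkey u i) : u i ≤ u i' := by
  unfold pkey at h
  rw [Prod.Lex.lt_iff] at h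
  rcases h with h1 | ⟨h1, _⟩ <;> simp at h1 <;> omega

open scoped Classical in
noncomputable def rk (b : Ω → ℕ) (u : Ω → ℤ) (i : Ω) : ℕ :=
  ∑ i' ∈ univ.filter (fun i' => 0 < u i' ∧ pkey u i' < pkey u i), b i'

open scoped Classical in
noncomputable def greedy (b : Ω → ℕ) (dj : ℕ) (u : Ω → ℤ) (i : Ω) : ℕ :=
  if 0 < u i then min (b i) (dj - rk b u i) else 0

lemma greedy_le (b : Ω → ℕ) (dj : ℕ) (u : Ω → ℤ) (i : Ω) : greedy b dj u i ≤ b i := by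
  unfold greedy; split_ifs <;> omega

lemma greedy_prefix_sum (b : Ω → ℕ) (dj : ℕ) (u : Ω → ℤ) :
    ∀ A : Finset Ω, (∀ i ∈ A, 0 < u i) →
      (∀ i ∈ A, ∀ i', 0 < u i' → pkey u i' < pkey u i → i' ∈ A) →
      ∑ i ∈ A, greedy b dj u i = min dj (∑ i ∈ A, b i) := by
  intro A
  induction A using Finset.strongInduction with
  | _ A ih =>
    intro hA hpre
    rcases A.eq_empty_or_nonempty with rfl | hne
    · simp
    obtain ⟨m, hmA, hmax⟩ := A.exists_max_image (pkey u) hne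
    have hprec : ∀ i ∈ A, i ≠ m → pkey u i < pkey u m := by
      intro i hi hne'
      exact lt_of_le_of_ne (hmax i hi) (fun h => hne' (pkey_inj u h))
    have hrm : rk b u m = ∑ i ∈ A.erase m, b i := by
      unfold rk
      apply Finset.sum_congr _ (fun _ _ => rfl)
      ext i'
      simp only [mem_filter, mem_univ, true_and, mem_erase]
      constructor
      · rintro ⟨h1, h2⟩
        exact ⟨fun h => absurd (h ▸ h2) (lt_irrefl _), hpre m hmA i' h1 h2⟩
      · rintro ⟨h1, h2⟩
        exact ⟨hA i' h2, hprec i' h2 h1⟩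
    have hIH : ∑ i ∈ A.erase m, greedy b dj u i = min dj (∑ i ∈ A.erase m, b i) := by
      apply ih _ (Finset.erase_ssubset hmA)
      · exact fun i hi => hA i (Finset.mem_of_mem_erase hi)
      · intro i hi i' hi' hlt
        have hiA := Finset.mem_of_mem_erase hi
        have : i' ∈ A := hpre i hiA i' hi' hlt
        refine Finset.mem_erase.mpr ⟨?_, this⟩
        rintro rfl
        have := hprec i hiA (Finset.mem_erase.mp hi).1
        exact absurd (hlt.trans this) (lt_irrefl _)
    have hsum : ∑ i ∈ A.erase m, greedy b dj u i + greedy b dj u m = ∑ i ∈ A, greedy b dj u i :=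
      Finset.sum_erase_add A _ hmA
    have hsumb : ∑ i ∈ A.erase m, b i + b m = ∑ i ∈ A, b i := Finset.sum_erase_add A _ hmA
    have hg : greedy b dj u m = min (b m) (dj - ∑ i ∈ A.erase m, b i) := by
      unfold greedy
      rw [if_pos (hA m hmA), hrm]
    omega



/-- key double-counting identity -/
lemma swap_identity (u : Ω → ℤ) (T : ℤ) (hT : ∀ i, u i ≤ T) (y : Ω → ℕ) :
    ∑ i ∈ univ.filter (fun i => 0 < u i), (u i).toNat * y i
      = ∑ t ∈ Finset.Ioc (0:ℤ) T, ∑ i ∈ univ.filter (fun i => t ≤ u i), y i := by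
  have step1 : ∀ i ∈ univ.filter (fun i => 0 < u i),
      (u i).toNat * y i = ∑ t ∈ (Finset.Ioc (0:ℤ) T).filter (fun t => t ≤ u i), y i := by
    intro i hi
    simp only [mem_filter, mem_univ, true_and] at hi
    have hfilter : (Finset.Ioc (0:ℤ) T).filter (fun t => t ≤ u i) = Finset.Ioc 0 (u i) := by
      ext t
      simp only [mem_filter, Finset.mem_Ioc]
      have := hT i
      omega
    rw [hfilter, Finset.sum_const, Int.card_Ioc]
    simp [Nat.smul_one_eq_cast]
  rw [Finset.sum_congr rfl step1]
  have hcomm : ∀ (i : Ω) (t : ℤ),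
      i ∈ univ.filter (fun i => 0 < u i) ∧ t ∈ (Finset.Ioc (0:ℤ) T).filter (fun t => t ≤ u i) ↔
      i ∈ (fun t => univ.filter (fun i => t ≤ u i)) t ∧ t ∈ Finset.Ioc (0:ℤ) T := by
    intro i t
    simp only [mem_filter, mem_univ, true_and, Finset.mem_Ioc]
    constructor
    · rintro ⟨h1, ⟨h2, h3⟩, h4⟩; exact ⟨h4, h2, h3⟩
    · rintro ⟨h1, h2, h3⟩; exact ⟨by omega, ⟨h2, h3⟩, h1⟩
  exact Finset.sum_comm' hcomm


lemma sum_greedy_pos (b : Ω → ℕ) (dj : ℕ) (u : Ω → ℤ) :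
    ∑ i ∈ univ.filter (fun i => 0 < u i), greedy b dj u i
      = min dj (∑ i ∈ univ.filter (fun i => 0 < u i), b i) := by
  apply greedy_prefix_sum
  · intro i hi; exact (mem_filter.mp hi).2
  · intro i _ i' hi' _; exact mem_filter.mpr ⟨mem_univ _, hi'⟩

lemma greedy_bundle (b : Ω → ℕ) (dj : ℕ) (u : Ω → ℤ) : IsBundle b dj (greedy b dj u) := by
  constructor
  · exact greedy_le b dj u
  · rw [← Finset.sum_filter_add_sum_filter_not univ (fun i => 0 < u i)]
    have h2 : ∑ i ∈ univ.filter (fun i => ¬ 0 < u i), greedy b dj u i = 0 := by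
      apply Finset.sum_eq_zero
      intro i hi
      have := (mem_filter.mp hi).2
      unfold greedy
      rw [if_neg this]
    rw [h2, add_zero, sum_greedy_pos]
    exact min_le_left _ _

lemma greedy_value (b : Ω → ℕ) (dj : ℕ) (u : Ω → ℤ) (T : ℤ) (hT : ∀ i, u i ≤ T) :
    ∑ i ∈ univ.filter (fun i => 0 < u i), (u i).toNat * greedy b dj u i
      = ∑ t ∈ Finset.Ioc (0:ℤ) T, min dj (SS b u t) := by
  rw [swap_identity u T hT]
  apply Finset.sum_congr rfl
  intro t ht
  have ht0 : 0 < t := (Finset.mem_Ioc.mp ht).1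
  have := greedy_prefix_sum b dj u (univ.filter (fun i => t ≤ u i))
    (by intro i hi; have := (mem_filter.mp hi).2; omega)
    (by
      intro i hi i' hi' hlt
      have h1 := (mem_filter.mp hi).2
      have h2 := pkey_lt_imp u hlt
      exact mem_filter.mpr ⟨mem_univ _, by omega⟩)
  rw [this]; rfl

lemma greedy_int_value (b : Ω → ℕ) (dj : ℕ) (u : Ω → ℤ) (T : ℤ) (hT : ∀ i, u i ≤ T) :
    ∑ i, u i * (greedy b dj u i : ℤ)
      = ((∑ t ∈ Finset.Ioc (0:ℤ) T, min dj (SS b u t) : ℕ) : ℤ) := by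
  rw [← greedy_value b dj u T hT]
  rw [← Finset.sum_filter_add_sum_filter_not univ (fun i => 0 < u i)
    (fun i => u i * (greedy b dj u i : ℤ))]
  have h2 : ∑ i ∈ univ.filter (fun i => ¬ 0 < u i), u i * (greedy b dj u i : ℤ) = 0 := by
    apply Finset.sum_eq_zero
    intro i hi
    have := (mem_filter.mp hi).2
    unfold greedy
    rw [if_neg this]
    simp
  rw [h2, add_zero]
  push_cast
  apply Finset.sum_congr rfl
  intro i hi
  have := (mem_filter.mp hi).2
  rw [Int.toNat_of_nonneg (by omega)]

lemma bundle_upper (b : Ω → ℕ) (dj : ℕ) (u : Ω → ℤ) (T : ℤ) (hT : ∀ i, u i ≤ T)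
    (y : Ω → ℕ) (hy : IsBundle b dj y) :
    ∑ i, u i * (y i : ℤ) ≤ ((∑ t ∈ Finset.Ioc (0:ℤ) T, min dj (SS b u t) : ℕ) : ℤ) := by
  rw [← Finset.sum_filter_add_sum_filter_not univ (fun i => 0 < u i)
    (fun i => u i * (y i : ℤ))]
  have h2 : ∑ i ∈ univ.filter (fun i => ¬ 0 < u i), u i * (y i : ℤ) ≤ 0 := by
    apply Finset.sum_nonpos
    intro i hi
    have := (mem_filter.mp hi).2
    exact mul_nonpos_of_nonpos_of_nonneg (by omega) (by positivity)
  have h1 : ∑ i ∈ univ.filter (fun i => 0 < u i), u i * (y i : ℤ)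
      = ((∑ i ∈ univ.filter (fun i => 0 < u i), (u i).toNat * y i : ℕ) : ℤ) := by
    push_cast
    apply Finset.sum_congr rfl
    intro i hi
    have := (mem_filter.mp hi).2
    rw [Int.toNat_of_nonneg (by omega)]
  have h3 : ∑ i ∈ univ.filter (fun i => 0 < u i), (u i).toNat * y i
      ≤ ∑ t ∈ Finset.Ioc (0:ℤ) T, min dj (SS b u t) := by
    rw [swap_identity u T hT]
    apply Finset.sum_le_sum
    intro t ht
    apply le_min
    · calc ∑ i ∈ univ.filter (fun i => t ≤ u i), y i ≤ ∑ i, y i :=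
            Finset.sum_le_sum_of_subset (Finset.filter_subset _ _)
        _ ≤ dj := hy.2
    · exact Finset.sum_le_sum (fun i _ => hy.1 i)
  have h4 : ((∑ i ∈ univ.filter (fun i => 0 < u i), (u i).toNat * y i : ℕ) : ℤ)
      ≤ ((∑ t ∈ Finset.Ioc (0:ℤ) T, min dj (SS b u t) : ℕ) : ℤ) := Nat.cast_le.mpr h3
  omega

lemma utility_int (v : Ω → ℕ) (q : Ω → ℝ) (u : Ω → ℤ) (hu : ∀ i, (v i : ℝ) - q i = (u i : ℝ))
    (y : Ω → ℕ) : utility v q y = ((∑ i, u i * (y i : ℤ) : ℤ) : ℝ) := by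
  unfold utility
  push_cast
  apply Finset.sum_congr rfl
  intro i _
  rw [hu i]

lemma indirect_eq (b : Ω → ℕ) (dj : ℕ) (v : Ω → ℕ) (q : Ω → ℝ) (u : Ω → ℤ)
    (hu : ∀ i, (v i : ℝ) - q i = (u i : ℝ)) (T : ℤ) (hT : ∀ i, u i ≤ T) :
    indirectUtility b dj v q = ((∑ t ∈ Finset.Ioc (0:ℤ) T, min dj (SS b u t) : ℕ) : ℝ) := by
  unfold indirectUtility
  apply IsGreatest.csSup_eq
  constructor
  · exact ⟨greedy b dj u, greedy_bundle b dj u, by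
      rw [utility_int v q u hu, greedy_int_value b dj u T hT]
      push_cast
      ring⟩
  · rintro r ⟨y, hy, rfl⟩
    rw [utility_int v q u hu]
    have : ((∑ i, u i * (y i : ℤ) : ℤ) : ℝ)
        ≤ (((∑ t ∈ Finset.Ioc (0:ℤ) T, min dj (SS b u t) : ℕ) : ℤ) : ℝ) :=
      Int.cast_le.mpr (bundle_upper b dj u T hT y hy)
    exact_mod_cast this

lemma filter_cast_le (b : Ω → ℕ) (u : Ω → ℤ) (s : ℤ) :
    ∑ i ∈ univ.filter (fun i => (s:ℝ) ≤ ((u i : ℤ) : ℝ)), b i = SS b u s := by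
  apply Finset.sum_congr _ (fun _ _ => rfl)
  ext i
  simp [Int.cast_le]

lemma mem_posPayoffs (u : Ω → ℤ) (x : ℝ) :
    x ∈ posPayoffs (fun i => ((u i : ℤ) : ℝ)) ↔ ∃ i, ((u i : ℤ) : ℝ) = x ∧ 0 < x := by
  unfold posPayoffs
  simp only [mem_filter, Finset.mem_image, mem_univ, true_and]
  tauto

lemma exists_round (u : Ω → ℤ) (s : ℤ) (hne : (univ.filter (fun i => s ≤ u i)).Nonempty) :
    ∃ i₀, s ≤ u i₀ ∧
      univ.filter (fun i => u i₀ ≤ u i) = univ.filter (fun i => s ≤ u i) := by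
  obtain ⟨i₀, hi₀, hmin⟩ := Finset.exists_min_image _ u hne
  have hs : s ≤ u i₀ := (mem_filter.mp hi₀).2
  refine ⟨i₀, hs, ?_⟩
  ext i
  simp only [mem_filter, mem_univ, true_and]
  constructor
  · intro h; omega
  · intro h; exact hmin i (mem_filter.mpr ⟨mem_univ _, h⟩)

lemma SS_pos_nonempty (b : Ω → ℕ) (u : Ω → ℤ) (s : ℤ) (h : 0 < SS b u s) :
    (univ.filter (fun i => s ≤ u i)).Nonempty := by
  by_contra hc
  rw [Finset.not_nonempty_iff_eq_empty] at hc
  unfold SS at h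
  rw [hc] at h
  simp at h

lemma theta_spec (b : Ω → ℕ) (dj : ℕ) (u : Ω → ℤ) (hd : 0 < dj) (hP : ∃ i, 0 < u i) :
    ∃ tz : ℤ, theta b dj (fun i => ((u i : ℤ) : ℝ)) = (tz : ℝ) ∧ 0 < tz ∧ (∃ i, u i = tz) ∧
      ((dj ≤ SS b u tz ∧ ∀ s : ℤ, tz < s → SS b u s < dj) ∨
       ((∀ s : ℤ, 0 < s → SS b u s < dj) ∧ ∀ i, 0 < u i → tz ≤ u i)) := by
  have hPne : (posPayoffs (fun i => ((u i : ℤ) : ℝ))).Nonempty := by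
    obtain ⟨i, hi⟩ := hP
    exact ⟨((u i : ℤ) : ℝ), (mem_posPayoffs u _).mpr ⟨i, rfl, by exact_mod_cast hi⟩⟩
  unfold theta
  by_cases hQ : ((posPayoffs (fun i => ((u i : ℤ) : ℝ))).filter
      (fun t => dj ≤ ∑ i ∈ Finset.univ.filter (fun i => t ≤ ((u i : ℤ) : ℝ)), b i)).Nonempty
  · rw [dif_pos hQ]
    have hmem := Finset.max'_mem _ hQ
    have hmemP := (Finset.mem_filter.mp hmem).1
    have hcond := (Finset.mem_filter.mp hmem).2
    obtain ⟨iθ, hiθ, hpos⟩ := (mem_posPayoffs u _).mp hmemP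
    have hiθ0 : 0 < u iθ := by exact_mod_cast hiθ ▸ hpos
    refine ⟨u iθ, hiθ.symm, hiθ0, ⟨iθ, rfl⟩, Or.inl ⟨?_, ?_⟩⟩
    · rw [← filter_cast_le b u (u iθ)]
      rw [← hiθ] at hcond
      exact hcond
    · intro s hs
      by_contra hc
      push_neg at hc
      have hne : (univ.filter (fun i => s ≤ u i)).Nonempty :=
        SS_pos_nonempty b u s (by omega)
      obtain ⟨i₀, hi₀, hfeq⟩ := exists_round u s hne
      have hmemQ : ((u i₀ : ℤ) : ℝ) ∈ (posPayoffs (fun i => ((u i : ℤ) : ℝ))).filter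
          (fun t => dj ≤ ∑ i ∈ Finset.univ.filter (fun i => t ≤ ((u i : ℤ) : ℝ)), b i) := by
        refine Finset.mem_filter.mpr ⟨(mem_posPayoffs u _).mpr ⟨i₀, rfl, ?_⟩, ?_⟩
        · exact_mod_cast (by omega : (0:ℤ) < u i₀)
        · rw [filter_cast_le b u (u i₀)]
          unfold SS
          rw [hfeq]
          exact hc
      have hle := Finset.le_max' _ _ hmemQ
      rw [← hiθ] at hle
      have : u i₀ ≤ u iθ := by exact_mod_cast hle
      omega
  · rw [dif_neg hQ, dif_pos hPne]
    have hmem := Finset.min'_mem _ hPne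
    obtain ⟨iθ, hiθ, hpos⟩ := (mem_posPayoffs u _).mp hmem
    have hiθ0 : 0 < u iθ := by exact_mod_cast hiθ ▸ hpos
    refine ⟨u iθ, hiθ.symm, hiθ0, ⟨iθ, rfl⟩, Or.inr ⟨?_, ?_⟩⟩
    · intro s hs
      by_contra hc
      push_neg at hc
      have hne : (univ.filter (fun i => s ≤ u i)).Nonempty :=
        SS_pos_nonempty b u s (by omega)
      obtain ⟨i₀, hi₀, hfeq⟩ := exists_round u s hne
      apply hQ
      refine ⟨((u i₀ : ℤ) : ℝ),
        Finset.mem_filter.mpr ⟨(mem_posPayoffs u _).mpr ⟨i₀, rfl, ?_⟩, ?_⟩⟩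
      · exact_mod_cast (by omega : (0:ℤ) < u i₀)
      · rw [filter_cast_le b u (u i₀)]
        unfold SS
        rw [hfeq]
        exact hc
    · intro i hi
      have hle := Finset.min'_le (posPayoffs (fun i => ((u i : ℤ) : ℝ))) _
        ((mem_posPayoffs u _).mpr ⟨i, rfl, by exact_mod_cast hi⟩)
      rw [← hiθ] at hle
      exact_mod_cast hle

lemma SS_split (b : Ω → ℕ) (u : Ω → ℤ) (X : Finset Ω) (t : ℤ) :
    SS b (fun i => u i - if i ∈ X then 1 else 0) t + ∑ i ∈ X.filter (fun i => u i = t), b i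
      = SS b u t := by
  unfold SS
  rw [← Finset.sum_filter_add_sum_filter_not (univ.filter (fun i => t ≤ u i))
    (fun i => t ≤ u i - if i ∈ X then 1 else 0) b]
  congr 1
  · apply Finset.sum_congr _ (fun _ _ => rfl)
    rw [Finset.filter_filter]
    ext i
    simp only [mem_filter, mem_univ, true_and]
    by_cases h : i ∈ X <;> simp [h] <;> omega
  · apply Finset.sum_congr _ (fun _ _ => rfl)
    rw [Finset.filter_filter]
    ext i
    simp only [mem_filter, mem_univ, true_and]
    by_cases h : i ∈ X <;> simp [h] <;> omega

lemma SS_pert_ge (b : Ω → ℕ) (u : Ω → ℤ) (X : Finset Ω) (t : ℤ) :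
    SS b u (t + 1) ≤ SS b (fun i => u i - if i ∈ X then 1 else 0) t := by
  apply Finset.sum_le_sum_of_subset
  intro i hi
  simp only [mem_filter, mem_univ, true_and] at *
  by_cases h : i ∈ X <;> simp [h] <;> omega

lemma SS_pert_split (b : Ω → ℕ) (u : Ω → ℤ) (X : Finset Ω) (tz : ℤ) :
    SS b (fun i => u i - if i ∈ X then 1 else 0) tz
      = SS b u (tz + 1) + ∑ i ∈ univ.filter (fun i => u i = tz) \ X, b i := by
  unfold SS
  rw [← Finset.sum_filter_add_sum_filter_not
    (univ.filter (fun i => tz ≤ u i - if i ∈ X then 1 else 0))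
    (fun i => tz + 1 ≤ u i) b]
  congr 1
  · apply Finset.sum_congr _ (fun _ _ => rfl)
    rw [Finset.filter_filter]
    ext i
    simp only [mem_filter, mem_univ, true_and]
    by_cases h : i ∈ X <;> simp [h] <;> omega
  · apply Finset.sum_congr _ (fun _ _ => rfl)
    rw [Finset.filter_filter]
    ext i
    simp only [mem_filter, mem_univ, true_and, Finset.mem_sdiff]
    by_cases h : i ∈ X <;> simp [h] <;> omega

lemma SS_succ_split (b : Ω → ℕ) (u : Ω → ℤ) (tz : ℤ) :
    SS b u tz = SS b u (tz + 1) + ∑ i ∈ univ.filter (fun i => u i = tz), b i := by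
  unfold SS
  rw [← Finset.sum_filter_add_sum_filter_not (univ.filter (fun i => tz ≤ u i))
    (fun i => tz + 1 ≤ u i) b]
  congr 1
  · apply Finset.sum_congr _ (fun _ _ => rfl)
    rw [Finset.filter_filter]
    ext i
    simp only [mem_filter, mem_univ, true_and]
    omega
  · apply Finset.sum_congr _ (fun _ _ => rfl)
    rw [Finset.filter_filter]
    ext i
    simp only [mem_filter, mem_univ, true_and]
    omega

lemma tsub_sum_min (a : ℕ) (s : Finset Ω) (f : Ω → ℕ) :
    a - ∑ i ∈ s, min (f i) a = a - ∑ i ∈ s, f i := by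
  by_cases h : ∀ i ∈ s, f i ≤ a
  · congr 1
    exact Finset.sum_congr rfl (fun i hi => min_eq_left (h i hi))
  · push_neg at h
    obtain ⟨i₀, hi₀, hlt⟩ := h
    have h1 : a ≤ ∑ i ∈ s, min (f i) a := by
      calc a = min (f i₀) a := (min_eq_right (by omega)).symm
        _ ≤ ∑ i ∈ s, min (f i) a :=
          Finset.single_le_sum (f := fun i => min (f i) a) (fun _ _ => Nat.zero_le _) hi₀
    have h2 : a ≤ ∑ i ∈ s, f i := by
      calc a ≤ f i₀ := by omega
        _ ≤ ∑ i ∈ s, f i := Finset.single_le_sum (fun _ _ => Nat.zero_le _) hi₀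
    omega

lemma fiber_sum (b : Ω → ℕ) (u : Ω → ℤ) (X : Finset Ω) (a T : ℤ) (hT : ∀ i, u i ≤ T) :
    ∑ t ∈ Finset.Ioc a T, ∑ i ∈ X.filter (fun i => u i = t), b i
      = ∑ i ∈ X.filter (fun i => a < u i), b i := by
  rw [← Finset.sum_fiberwise_of_maps_to (g := u) (t := Finset.Ioc a T)
    (fun i hi => Finset.mem_Ioc.mpr ⟨(mem_filter.mp hi).2, hT i⟩) b]
  apply Finset.sum_congr rfl
  intro t ht
  apply Finset.sum_congr _ (fun _ _ => rfl)
  rw [Finset.filter_filter]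
  ext i
  simp only [mem_filter]
  have := (Finset.mem_Ioc.mp ht).1
  constructor
  · rintro ⟨h1, h2⟩; exact ⟨h1, by omega, h2⟩
  · rintro ⟨h1, h2, h3⟩; exact ⟨h1, h3⟩

lemma sum_filter_inter (p : Ω → Prop) [DecidablePred p] (X : Finset Ω) (b : Ω → ℕ) :
    ∑ i ∈ (univ.filter p) ∩ X, b i = ∑ i ∈ X.filter p, b i := by
  apply Finset.sum_congr _ (fun _ _ => rfl)
  ext i
  simp only [Finset.mem_inter, mem_filter, mem_univ, true_and]
  tauto

lemma posPayoffs_eq_empty (u : Ω → ℤ) (h : ∀ i, u i ≤ 0) :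
    posPayoffs (fun i => ((u i : ℤ) : ℝ)) = ∅ := by
  rw [Finset.eq_empty_iff_forall_notMem]
  intro x hx
  obtain ⟨i, hi, hpos⟩ := (mem_posPayoffs u x).mp hx
  rw [← hi] at hpos
  have : 0 < u i := by exact_mod_cast hpos
  exact absurd this (by have := h i; omega)

lemma sum_Ioc_consec (f : ℤ → ℕ) {a b c : ℤ} (hab : a ≤ b) (hbc : b ≤ c) :
    ∑ t ∈ Finset.Ioc a b, f t + ∑ t ∈ Finset.Ioc b c, f t = ∑ t ∈ Finset.Ioc a c, f t := by
  rw [← Finset.Ioc_union_Ioc_eq_Ioc hab hbc, Finset.sum_union]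
  apply Finset.disjoint_left.mpr
  intro x hx hx'
  simp only [Finset.mem_Ioc] at hx hx'
  omega

lemma OmegaP_eq (b : Ω → ℕ) (dj : ℕ) (u : Ω → ℤ) (hd : dj ≠ 0) (hP : ∃ i, 0 < u i)
    (tz : ℤ) (hθ : theta b dj (fun i => ((u i : ℤ) : ℝ)) = (tz : ℝ)) :
    OmegaP b dj (fun i => ((u i : ℤ) : ℝ)) = univ.filter (fun i => tz < u i) := by
  unfold OmegaP
  rw [if_neg, hθ]
  · ext i
    simp only [mem_filter, mem_univ, true_and]
    exact ⟨fun h => by exact_mod_cast h, fun h => by exact_mod_cast h⟩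
  · push_neg
    refine ⟨hd, ?_⟩
    obtain ⟨i, hi⟩ := hP
    exact ⟨((u i : ℤ) : ℝ), (mem_posPayoffs u _).mpr ⟨i, rfl, by exact_mod_cast hi⟩⟩

lemma OmegaPP_eq (b : Ω → ℕ) (dj : ℕ) (u : Ω → ℤ) (hd : dj ≠ 0) (hP : ∃ i, 0 < u i)
    (tz : ℤ) (hθ : theta b dj (fun i => ((u i : ℤ) : ℝ)) = (tz : ℝ)) :
    OmegaPP b dj (fun i => ((u i : ℤ) : ℝ)) = univ.filter (fun i => u i = tz) := by
  unfold OmegaPP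
  rw [if_neg, hθ]
  · ext i
    simp only [mem_filter, mem_univ, true_and]
    exact ⟨fun h => by exact_mod_cast h, fun h => by exact_mod_cast h⟩
  · push_neg
    refine ⟨hd, ?_⟩
    obtain ⟨i, hi⟩ := hP
    exact ⟨((u i : ℤ) : ℝ), (mem_posPayoffs u _).mpr ⟨i, rfl, by exact_mod_cast hi⟩⟩

lemma layer_diff (b : Ω → ℕ) (dj : ℕ) (u : Ω → ℤ) (X : Finset Ω) (T : ℤ)
    (hT : ∀ i, u i ≤ T) :
    ∑ t ∈ Finset.Ioc (0:ℤ) T, min dj (SS b (fun i => u i - if i ∈ X then 1 else 0) t)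
      + ((∑ i ∈ OmegaP b dj (fun i => ((u i : ℤ) : ℝ)) ∩ X, b i) +
         (dPPr b dj (fun i => ((u i : ℤ) : ℝ)) -
           ∑ i ∈ OmegaPP b dj (fun i => ((u i : ℤ) : ℝ)) \ X,
             min (b i) (dPPr b dj (fun i => ((u i : ℤ) : ℝ)))))
      = ∑ t ∈ Finset.Ioc (0:ℤ) T, min dj (SS b u t) := by
  by_cases hd : dj = 0
  · subst hd
    simp [OmegaP, OmegaPP, dPPr, dPr]
  by_cases hP0 : ∀ i, u i ≤ 0
  · have hemp := posPayoffs_eq_empty u hP0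
    have hOP : OmegaP b dj (fun i => ((u i : ℤ) : ℝ)) = ∅ := by
      unfold OmegaP; rw [if_pos (Or.inr hemp)]
    have hOPP : OmegaPP b dj (fun i => ((u i : ℤ) : ℝ)) = ∅ := by
      unfold OmegaPP; rw [if_pos (Or.inr hemp)]
    have hdPPr : dPPr b dj (fun i => ((u i : ℤ) : ℝ)) = 0 := by
      unfold dPPr; rw [hOPP]; simp
    rw [hOP, hOPP, hdPPr]
    simp only [Finset.empty_inter, Finset.sum_empty, Finset.empty_sdiff, Nat.zero_sub,
      add_zero]
    apply Finset.sum_congr rfl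
    intro t ht
    have ht0 := (Finset.mem_Ioc.mp ht).1
    have hz : SS b u t = 0 := by
      unfold SS
      apply Finset.sum_eq_zero
      intro i hi
      have h1 := (mem_filter.mp hi).2
      have := hP0 i
      omega
    have hz' : SS b (fun i => u i - if i ∈ X then 1 else 0) t = 0 := by
      unfold SS
      apply Finset.sum_eq_zero
      intro i hi
      have h1 := (mem_filter.mp hi).2
      have := hP0 i
      by_cases h : i ∈ X <;> simp [h] at h1 <;> omega
    rw [hz, hz']
  push_neg at hP0
  obtain ⟨tz, hθ, htz0, ⟨iθ, hiθ⟩, hspec⟩ := theta_spec b dj u (by omega) hP0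
  have htzT : tz ≤ T := hiθ ▸ hT iθ
  have hOP := OmegaP_eq b dj u hd hP0 tz hθ
  have hOPP := OmegaPP_eq b dj u hd hP0 tz hθ
  have hdPr : dPr b dj (fun i => ((u i : ℤ) : ℝ)) = SS b u (tz + 1) := by
    unfold dPr
    rw [hOP]
    apply Finset.sum_congr _ (fun _ _ => rfl)
    ext i
    simp only [mem_filter, mem_univ, true_and]
    omega
  have hterm1 : ∑ i ∈ OmegaP b dj (fun i => ((u i : ℤ) : ℝ)) ∩ X, b i
      = ∑ i ∈ X.filter (fun i => tz < u i), b i := by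
    rw [hOP]; exact sum_filter_inter _ X b
  have hsucc := SS_succ_split b u tz
  rcases hspec with ⟨hge, hlt⟩ | ⟨hlt, hmin⟩
  · -- case 2a
    have hlt1 : SS b u (tz + 1) < dj := hlt (tz + 1) (by omega)
    have hdPPr : dPPr b dj (fun i => ((u i : ℤ) : ℝ)) = dj - SS b u (tz + 1) := by
      unfold dPPr
      rw [hOPP, hdPr]
      omega
    have htsub : dPPr b dj (fun i => ((u i : ℤ) : ℝ)) -
        ∑ i ∈ OmegaPP b dj (fun i => ((u i : ℤ) : ℝ)) \ X,
          min (b i) (dPPr b dj (fun i => ((u i : ℤ) : ℝ)))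
        = dPPr b dj (fun i => ((u i : ℤ) : ℝ)) -
          ∑ i ∈ (univ.filter (fun i => u i = tz)) \ X, b i := by
      rw [hOPP]
      exact tsub_sum_min _ _ b
    have hpert := SS_pert_split b u X tz
    have htzpt : min dj (SS b (fun i => u i - if i ∈ X then 1 else 0) tz) +
        (dPPr b dj (fun i => ((u i : ℤ) : ℝ)) -
          ∑ i ∈ OmegaPP b dj (fun i => ((u i : ℤ) : ℝ)) \ X,
            min (b i) (dPPr b dj (fun i => ((u i : ℤ) : ℝ))))
        = min dj (SS b u tz) := by
      rw [htsub, hdPPr, hpert]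
      omega
    have hA : ∀ t ∈ Finset.Ioc (0:ℤ) (tz - 1),
        min dj (SS b (fun i => u i - if i ∈ X then 1 else 0) t) = min dj (SS b u t) := by
      intro t ht
      obtain ⟨h0t, httz⟩ := Finset.mem_Ioc.mp ht
      have h1 : dj ≤ SS b u t := le_trans hge (SS_antitone b u (by omega))
      have h2 : dj ≤ SS b (fun i => u i - if i ∈ X then 1 else 0) t :=
        le_trans (le_trans hge (SS_antitone b u (by omega : t + 1 ≤ tz)))
          (SS_pert_ge b u X t)
      omega
    have hC : ∀ t ∈ Finset.Ioc tz T,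
        min dj (SS b u t) = min dj (SS b (fun i => u i - if i ∈ X then 1 else 0) t)
          + ∑ i ∈ X.filter (fun i => u i = t), b i := by
      intro t ht
      obtain ⟨h1t, htT⟩ := Finset.mem_Ioc.mp ht
      have h1 : SS b u t < dj := hlt t h1t
      have h2 := SS_split b u X t
      omega
    have e1 : ∑ t ∈ Finset.Ioc (0:ℤ) (tz-1),
          min dj (SS b (fun i => u i - if i ∈ X then 1 else 0) t)
        = ∑ t ∈ Finset.Ioc (0:ℤ) (tz-1), min dj (SS b u t) :=
      Finset.sum_congr rfl hA
    have e2 : ∑ t ∈ Finset.Ioc tz T, min dj (SS b u t)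
        = ∑ t ∈ Finset.Ioc tz T,
            min dj (SS b (fun i => u i - if i ∈ X then 1 else 0) t)
          + ∑ i ∈ X.filter (fun i => tz < u i), b i := by
      rw [Finset.sum_congr rfl hC, Finset.sum_add_distrib, fiber_sum b u X tz T hT]
    have hsing : Finset.Ioc (tz-1) tz = {tz} := by
      ext x
      simp only [Finset.mem_Ioc, Finset.mem_singleton]
      omega
    have s1 : ∑ t ∈ Finset.Ioc (0:ℤ) (tz-1),
          min dj (SS b (fun i => u i - if i ∈ X then 1 else 0) t)
        + ∑ t ∈ Finset.Ioc (tz-1) tz,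
          min dj (SS b (fun i => u i - if i ∈ X then 1 else 0) t)
        = ∑ t ∈ Finset.Ioc (0:ℤ) tz,
          min dj (SS b (fun i => u i - if i ∈ X then 1 else 0) t) :=
      sum_Ioc_consec _ (show (0:ℤ) ≤ tz - 1 by omega) (show tz - 1 ≤ tz by omega)
    have s2 : ∑ t ∈ Finset.Ioc (0:ℤ) tz,
          min dj (SS b (fun i => u i - if i ∈ X then 1 else 0) t)
        + ∑ t ∈ Finset.Ioc tz T,
          min dj (SS b (fun i => u i - if i ∈ X then 1 else 0) t)
        = ∑ t ∈ Finset.Ioc (0:ℤ) T,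
          min dj (SS b (fun i => u i - if i ∈ X then 1 else 0) t) :=
      sum_Ioc_consec _ (show (0:ℤ) ≤ tz by omega) htzT
    have s3 : ∑ t ∈ Finset.Ioc (0:ℤ) (tz-1), min dj (SS b u t)
        + ∑ t ∈ Finset.Ioc (tz-1) tz, min dj (SS b u t)
        = ∑ t ∈ Finset.Ioc (0:ℤ) tz, min dj (SS b u t) :=
      sum_Ioc_consec _ (show (0:ℤ) ≤ tz - 1 by omega) (show tz - 1 ≤ tz by omega)
    have s4 : ∑ t ∈ Finset.Ioc (0:ℤ) tz, min dj (SS b u t)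
        + ∑ t ∈ Finset.Ioc tz T, min dj (SS b u t)
        = ∑ t ∈ Finset.Ioc (0:ℤ) T, min dj (SS b u t) :=
      sum_Ioc_consec _ (show (0:ℤ) ≤ tz by omega) htzT
    rw [hsing, Finset.sum_singleton] at s1 s3
    rw [hterm1, ← s2, ← s1, ← s4, ← s3, e1, e2]
    omega
  · -- case 2b
    have htzlt : SS b u tz < dj := hlt tz htz0
    have hdPPr : dPPr b dj (fun i => ((u i : ℤ) : ℝ))
        = ∑ i ∈ univ.filter (fun i => u i = tz), b i := by
      unfold dPPr
      rw [hOPP, hdPr]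
      omega
    have hminsum : ∑ i ∈ OmegaPP b dj (fun i => ((u i : ℤ) : ℝ)) \ X,
          min (b i) (dPPr b dj (fun i => ((u i : ℤ) : ℝ)))
        = ∑ i ∈ (univ.filter (fun i => u i = tz)) \ X, b i := by
      rw [hOPP, hdPPr]
      apply Finset.sum_congr rfl
      intro i hi
      have hmem : i ∈ univ.filter (fun i => u i = tz) := (Finset.mem_sdiff.mp hi).1
      exact min_eq_left (Finset.single_le_sum (fun _ _ => Nat.zero_le _) hmem)
    have hsplit_a : ∑ i ∈ (univ.filter (fun i => u i = tz)) ∩ X, b i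
        + ∑ i ∈ (univ.filter (fun i => u i = tz)) \ X, b i
        = ∑ i ∈ univ.filter (fun i => u i = tz), b i :=
      Finset.sum_inter_add_sum_sdiff _ _ _
    have hOPPX : ∑ i ∈ (univ.filter (fun i => u i = tz)) ∩ X, b i
        = ∑ i ∈ X.filter (fun i => u i = tz), b i := sum_filter_inter _ X b
    have hC : ∀ t ∈ Finset.Ioc (0:ℤ) T,
        min dj (SS b u t) = min dj (SS b (fun i => u i - if i ∈ X then 1 else 0) t)
          + ∑ i ∈ X.filter (fun i => u i = t), b i := by
      intro t ht
      obtain ⟨h1t, htT⟩ := Finset.mem_Ioc.mp ht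
      have h1 : SS b u t < dj := hlt t h1t
      have h2 := SS_split b u X t
      omega
    have e2 : ∑ t ∈ Finset.Ioc (0:ℤ) T, min dj (SS b u t)
        = ∑ t ∈ Finset.Ioc (0:ℤ) T,
            min dj (SS b (fun i => u i - if i ∈ X then 1 else 0) t)
          + ∑ i ∈ X.filter (fun i => 0 < u i), b i := by
      rw [Finset.sum_congr rfl hC, Finset.sum_add_distrib, fiber_sum b u X 0 T hT]
    have hposplit : ∑ i ∈ X.filter (fun i => 0 < u i), b i
        = ∑ i ∈ X.filter (fun i => tz < u i), b i
          + ∑ i ∈ X.filter (fun i => u i = tz), b i := by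
      rw [← Finset.sum_filter_add_sum_filter_not (X.filter (fun i => 0 < u i))
        (fun i => tz < u i) b]
      congr 1
      · apply Finset.sum_congr _ (fun _ _ => rfl)
        rw [Finset.filter_filter]
        ext i
        simp only [mem_filter]
        constructor
        · rintro ⟨h1, _, h3⟩; exact ⟨h1, h3⟩
        · rintro ⟨h1, h3⟩; exact ⟨h1, by omega, h3⟩
      · apply Finset.sum_congr _ (fun _ _ => rfl)
        rw [Finset.filter_filter]
        ext i
        simp only [mem_filter]
        constructor
        · rintro ⟨h1, h2', h3⟩
          have := hmin i h2'
          exact ⟨h1, by omega⟩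
        · rintro ⟨h1, h2'⟩
          exact ⟨h1, by omega, by omega⟩
    rw [hterm1, hminsum, hdPPr]
    omega

end Helpers

/-- Lyapunov difference formula,
`L(p) − L(p + χ_X) = d_p(X) − ∑_{i∈X} b i` for integer prices `p`. -/
theorem lyapunov_difference
    {Ω N : Type*} [Fintype Ω] [Fintype N] [DecidableEq Ω]
    (b : Ω → ℕ) (d : N → ℕ) (v : Ω → N → ℕ) (p : Ω → ℕ) (X : Finset Ω) :
    Lyapunov b d v (fun i => (p i : ℝ)) -
        Lyapunov b d v (fun i => (p i : ℝ) + if i ∈ X then 1 else 0) =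
      (overDemand b d v (fun i => (p i : ℝ)) X : ℝ) - ∑ i ∈ X, (b i : ℝ) := by
  classical
  have hbX : ∑ i, (b i : ℝ) * ((p i : ℝ) + if i ∈ X then 1 else 0)
      = ∑ i, (b i : ℝ) * (p i : ℝ) + ∑ i ∈ X, (b i : ℝ) := by
    rw [Finset.sum_congr rfl (g := fun i => (b i : ℝ) * (p i : ℝ) +
        if i ∈ X then (b i : ℝ) else 0)
      (fun i _ => by by_cases h : i ∈ X <;> simp [h] <;> ring)]
    rw [Finset.sum_add_distrib, Finset.sum_ite_mem, Finset.univ_inter]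
  have key : ∀ j : N,
      indirectUtility b (d j) (fun i => v i j) (fun i => (p i : ℝ))
        = indirectUtility b (d j) (fun i => v i j)
            (fun i => (p i : ℝ) + if i ∈ X then 1 else 0)
          + (((∑ i ∈ OmegaP b (d j) (payoff v (fun i => (p i : ℝ)) j) ∩ X, b i) +
              (dPPr b (d j) (payoff v (fun i => (p i : ℝ)) j) -
                ∑ i ∈ OmegaPP b (d j) (payoff v (fun i => (p i : ℝ)) j) \ X,
                  min (b i) (dPPr b (d j) (payoff v (fun i => (p i : ℝ)) j)))) : ℕ) := by
    intro j
    set u : Ω → ℤ := fun i => (v i j : ℤ) - (p i : ℤ) with hu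
    have hpay : payoff v (fun i => (p i : ℝ)) j = fun i => ((u i : ℤ) : ℝ) := by
      funext i
      unfold payoff
      rw [hu]
      push_cast
      ring
    have hT : ∀ i, u i ≤ ∑ i', (v i' j : ℤ) := by
      intro i
      have h1 : (v i j : ℤ) ≤ ∑ i', (v i' j : ℤ) :=
        Finset.single_le_sum (f := fun i' => (v i' j : ℤ))
          (fun _ _ => by positivity) (mem_univ i)
      have h2 : u i = (v i j : ℤ) - (p i : ℤ) := rfl
      omega
    have hT2 : ∀ i, u i - (if i ∈ X then 1 else 0) ≤ ∑ i', (v i' j : ℤ) := by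
      intro i
      have := hT i
      by_cases h : i ∈ X <;> simp [h] <;> omega
    have h1 := indirect_eq b (d j) (fun i => v i j) (fun i => (p i : ℝ)) u
      (by intro i; rw [hu]; push_cast; ring) (∑ i', (v i' j : ℤ)) hT
    have h2 := indirect_eq b (d j) (fun i => v i j)
      (fun i => (p i : ℝ) + if i ∈ X then 1 else 0)
      (fun i => u i - if i ∈ X then 1 else 0)
      (by
        intro i
        rw [hu]
        by_cases h : i ∈ X <;> simp [h] <;> push_cast <;> ring)
      (∑ i', (v i' j : ℤ)) hT2
    have h3 := layer_diff b (d j) u X (∑ i', (v i' j : ℤ)) hT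
    rw [h1, h2, hpay, ← h3]
    push_cast
    ring
  unfold Lyapunov
  rw [hbX, Finset.sum_congr rfl (fun j _ => key j), Finset.sum_add_distrib]
  have hOD : (overDemand b d v (fun i => (p i : ℝ)) X : ℝ)
      = ∑ j, (((∑ i ∈ OmegaP b (d j) (payoff v (fun i => (p i : ℝ)) j) ∩ X, b i) +
              (dPPr b (d j) (payoff v (fun i => (p i : ℝ)) j) -
                ∑ i ∈ OmegaPP b (d j) (payoff v (fun i => (p i : ℝ)) j) \ X,
                  min (b i) (dPPr b (d j) (payoff v (fun i => (p i : ℝ)) j)))) : ℕ) := by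
    unfold overDemand
    push_cast
    rfl
  rw [hOD]
  push_cast
  ring
end

section
/- Social optimality of Walrasian equilibria: let p be a price vector and x an allocation that is stable for p and in which every object with positive price is completely sold, i.e. ∑_{j∈N} x i j = b i for every i with p(i) > 0. Then x maximizes the welfare ∑_{i∈Ω}∑_{j∈N} v i j · x i j among all feasible allocations. -/
open Finset

/-- Welfare of an allocation. -/
def welfare {Ω N : Type*} [Fintype Ω] [Fintype N] (v : Ω → N → ℕ) (x : Ω → N → ℕ) : ℕ :=
  ∑ i, ∑ j, v i j * x i j

/- Welfare splits into the buyers' utilities plus the sellers' revenue. Stability maximizes each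
buyer's utility separately, and revenue is maximal too: an object with positive price is sold out
under `x`, while under any feasible allocation at most its supply is sold. -/

theorem welfare_eq_sum_utility_add_revenue {Ω N : Type*} [Fintype Ω] [Fintype N]
    (v : Ω → N → ℕ) (p : Ω → ℝ) (y : Ω → N → ℕ) :
    (welfare v y : ℝ) =
      ∑ j, utility (fun i => v i j) p (fun i => y i j) + ∑ i, p i * (∑ j, y i j : ℕ) := by
  unfold welfare utility
  push_cast
  rw [Finset.sum_comm (γ := N), ← Finset.sum_add_distrib]
  refine Finset.sum_congr rfl fun i _ => ?_
  rw [Finset.mul_sum, ← Finset.sum_add_distrib]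
  exact Finset.sum_congr rfl fun j _ => by ring

theorem Feasible.isBundle {Ω N : Type*} [Fintype Ω] [Fintype N] {b : Ω → ℕ} {d : N → ℕ}
    {z : Ω → N → ℕ} (hz : Feasible b d z) (j : N) : IsBundle b (d j) (fun i => z i j) :=
  ⟨fun i => (Finset.single_le_sum (fun k _ => Nat.zero_le (z i k)) (Finset.mem_univ j)).trans
    (hz.1 i), hz.2 j⟩

theorem Stable.sum_utility_le {Ω N : Type*} [Fintype Ω] [Fintype N] {b : Ω → ℕ} {d : N → ℕ}
    {v : Ω → N → ℕ} {p : Ω → ℝ} {x z : Ω → N → ℕ} (hx : Stable b d v p x)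
    (hz : Feasible b d z) :
    ∑ j, utility (fun i => v i j) p (fun i => z i j) ≤
      ∑ j, utility (fun i => v i j) p (fun i => x i j) :=
  Finset.sum_le_sum fun j _ => (hx.2 j).2 _ (hz.isBundle j)

theorem revenue_le_of_sold_out {Ω N : Type*} [Fintype Ω] [Fintype N] {b : Ω → ℕ}
    {p : Ω → ℝ} (hp : ∀ i, 0 ≤ p i) {x z : Ω → N → ℕ}
    (hsold : ∀ i, 0 < p i → ∑ j, x i j = b i) (hz : ∀ i, ∑ j, z i j ≤ b i) :
    ∑ i, p i * (∑ j, z i j : ℕ) ≤ ∑ i, p i * (∑ j, x i j : ℕ) := by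
  refine Finset.sum_le_sum fun i _ => ?_
  rcases (hp i).lt_or_eq with hpos | hzero
  · rw [hsold i hpos]
    exact mul_le_mul_of_nonneg_left (by exact_mod_cast hz i) hpos.le
  · simp [← hzero]

/-- a stable allocation that completely sells every positively priced
object maximizes welfare among all feasible allocations. -/
theorem walrasian_equilibrium_socially_optimal
    {Ω N : Type*} [Fintype Ω] [Fintype N]
    (b : Ω → ℕ) (d : N → ℕ) (v : Ω → N → ℕ)
    (p : Ω → ℝ) (hp : ∀ i, 0 ≤ p i)
    (x : Ω → N → ℕ) (hstable : Stable b d v p x)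
    (hsold : ∀ i, 0 < p i → ∑ j, x i j = b i) :
    ∀ z : Ω → N → ℕ, Feasible b d z → welfare v z ≤ welfare v x := by
  intro z hz
  have hutility := hstable.sum_utility_le hz
  have hrevenue := revenue_le_of_sold_out hp hsold hz.1
  have : (welfare v z : ℝ) ≤ welfare v x := by
    rw [welfare_eq_sum_utility_add_revenue v p z, welfare_eq_sum_utility_add_revenue v p x]
    exact add_le_add hutility hrevenue
  exact_mod_cast this
end
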